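/- arXiv:2207.12088 — 6 statements merged into one kernel-verified Lean document; each statement's English description precedes it below -/
import Mathlib

section
/- For all real x ≠ 0, x·coth(x) = 1 + Σ_{k=1}^∞ 2x²/(x² + k²π²) (Mittag-Leffler expansion of the hyperbolic cotangent). -/
/-!
Substitute `z = i x / π` into Euler's partial-fraction expansion of the cotangent,
`π cot (π z) - 1 / z = ∑_{n ≥ 1} (1 / (z - n) + 1 / (z + n))`. Since `cot (i x) = -i coth x`,
the left side becomes `-i π (coth x - 1 / x)`, and each term `2 z / (z² - n²)` becomes
`-i π · 2 x / (x² + n² π²)`; multiplying by `x / (-i π) = z` gives the expansion.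
-/

open Real

noncomputable def rcoth (x : ℝ) : ℝ := Real.cosh x / Real.sinh x

namespace Complex

lemma mem_integerComplement_of_im_ne_zero {z : ℂ} (hz : z.im ≠ 0) :
    z ∈ integerComplement :=
  fun ⟨n, hn⟩ ↦ hz (by simp [← hn])

lemma hasSum_cotTerm {z : ℂ} (hz : z ∈ integerComplement) :
    HasSum (cotTerm z) (π * cot (π * z) - 1 / z) :=
  (summable_cotTerm hz).hasSum_iff_tendsto_nat.mpr (tendsto_logDeriv_euler_cot_sub hz)

lemma cot_mul_I (z : ℂ) : cot (z * I) = -I * (cosh z / sinh z) := by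
  rw [cot_eq_cos_div_sin, cos_mul_I, sin_mul_I, ← div_div, div_I]
  ring

lemma cotTerm_mul_I_div_pi (x : ℝ) (n : ℕ) :
    cotTerm (x * I / π) n * (x * I / π) =
      ((2 * x ^ 2 / (x ^ 2 + ((n : ℝ) + 1) ^ 2 * π ^ 2) : ℝ) : ℂ) := by
  have hπ : (π : ℂ) ≠ 0 := ofReal_ne_zero.mpr pi_ne_zero
  have hm : (x : ℂ) ^ 2 + π ^ 2 * (n + 1) ^ 2 ≠ 0 := by
    exact_mod_cast (by positivity : (0 : ℝ) < x ^ 2 + π ^ 2 * ((n : ℝ) + 1) ^ 2).ne'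
  have hsub : (x : ℂ) * I - π * (n + 1) ≠ 0 := fun h ↦ hm <| by
    linear_combination (-(x * I + π * (n + 1))) * h + x ^ 2 * I_sq
  have hadd : (x : ℂ) * I + π * (n + 1) ≠ 0 := fun h ↦ hm <| by
    linear_combination (-(x * I - π * (n + 1))) * h + x ^ 2 * I_sq
  rw [cotTerm, div_sub' hπ, div_add' _ _ _ hπ, one_div_div, one_div_div]
  push_cast
  field_simp
  linear_combination 2 * x ^ 2 * π ^ 2 * (n + 1) ^ 2 * I_sq

lemma pi_mul_cot_sub_inv_mul_I_div_pi {x : ℝ} (hx : x ≠ 0) :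
    (π * cot (π * (x * I / π)) - 1 / (x * I / π)) * (x * I / π) =
      ((x * rcoth x - 1 : ℝ) : ℂ) := by
  have hπ : (π : ℂ) ≠ 0 := ofReal_ne_zero.mpr pi_ne_zero
  have hx' : (x : ℂ) ≠ 0 := ofReal_ne_zero.mpr hx
  rw [mul_div_cancel₀ _ hπ, cot_mul_I, rcoth]
  push_cast
  field_simp
  linear_combination (-(cosh x * x / sinh x)) * I_sq

end Complex

theorem mittag_leffler_coth (x : ℝ) (hx : x ≠ 0) :
    x * rcoth x = 1 + ∑' k : ℕ, 2 * x ^ 2 / (x ^ 2 + ((k : ℝ) + 1) ^ 2 * π ^ 2) := by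
  have hz : (x * Complex.I / π).im ≠ 0 := by simp [hx, pi_ne_zero]
  have h := (Complex.hasSum_cotTerm (Complex.mem_integerComplement_of_im_ne_zero hz)).mul_right
    (x * Complex.I / π)
  simp only [Complex.cotTerm_mul_I_div_pi, Complex.pi_mul_cot_sub_inv_mul_I_div_pi hx] at h
  rw [(Complex.hasSum_ofReal.mp h).tsum_eq]
  ring
end

section
/- For every δ > 0 and nonzero real n, the quantity L_δ(n) := (3/δ)(n·coth(δn) − 1/δ) satisfies 0 < L_δ(n) < n². -/
open Real

noncomputable def Ld (δ n : ℝ) : ℝ := (3 / δ) * (n * rcoth (δ * n) - 1 / δ)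

/-!
Both bounds reduce to `1 < x coth x < 1 + x² / 3` for `x = δn ≠ 0`, and since `x coth x` is even
it suffices to take `x > 0`. There they are `sinh x < x cosh x` and
`3 x cosh x < (3 + x²) sinh x`: both sides agree at `0`, and the derivatives of the differences are
`x sinh x` and `x (x cosh x - sinh x)`, positive by the first inequality.
-/

lemma pos_of_map_zero_of_deriv_pos {f : ℝ → ℝ} (hf : Continuous f) (h0 : f 0 = 0)
    (hf' : ∀ y, 0 < y → 0 < deriv f y) {x : ℝ} (hx : 0 < x) : 0 < f x := by
  have hmono : StrictMonoOn f (Set.Ici 0) :=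
    strictMonoOn_of_deriv_pos (convex_Ici 0) hf.continuousOn fun y hy =>
      hf' y (by rwa [interior_Ici] at hy)
  simpa [h0] using hmono Set.self_mem_Ici (Set.mem_Ici.2 hx.le) hx

lemma sinh_lt_mul_cosh {x : ℝ} (hx : 0 < x) : sinh x < x * cosh x := by
  have hderiv (y : ℝ) : deriv (fun y => y * cosh y - sinh y) y = y * sinh y := by
    have hd : HasDerivAt (fun y => y * cosh y - sinh y) (1 * cosh y + y * sinh y - cosh y) y :=
      ((hasDerivAt_id' y).mul (hasDerivAt_cosh y)).sub (hasDerivAt_sinh y)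
    rw [hd.deriv]
    ring
  have := pos_of_map_zero_of_deriv_pos (f := fun y => y * cosh y - sinh y) (by fun_prop)
    (by simp) (fun y hy => by rw [hderiv]; exact mul_pos hy (sinh_pos_iff.2 hy)) hx
  linarith

lemma three_mul_mul_cosh_lt {x : ℝ} (hx : 0 < x) : 3 * (x * cosh x) < (3 + x ^ 2) * sinh x := by
  have hderiv (y : ℝ) : deriv (fun y => (3 + y ^ 2) * sinh y - 3 * (y * cosh y)) y =
      y * (y * cosh y - sinh y) := by
    have hd : HasDerivAt (fun y => (3 + y ^ 2) * sinh y - 3 * (y * cosh y))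
        (2 * y ^ 1 * sinh y + (3 + y ^ 2) * cosh y - 3 * (1 * cosh y + y * sinh y)) y :=
      (((hasDerivAt_pow 2 y).const_add 3).mul (hasDerivAt_sinh y)).sub
        (((hasDerivAt_id' y).mul (hasDerivAt_cosh y)).const_mul 3)
    rw [hd.deriv]
    ring
  have := pos_of_map_zero_of_deriv_pos
    (f := fun y => (3 + y ^ 2) * sinh y - 3 * (y * cosh y)) (by fun_prop) (by simp)
    (fun y hy => by rw [hderiv]; exact mul_pos hy (sub_pos.2 (sinh_lt_mul_cosh hy))) hx
  linarith

lemma neg_mul_rcoth_neg (x : ℝ) : -x * rcoth (-x) = x * rcoth x := by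
  simp only [rcoth, cosh_neg, sinh_neg, div_neg, neg_mul_neg]

lemma one_lt_mul_rcoth_of_pos {x : ℝ} (hx : 0 < x) : 1 < x * rcoth x := by
  rw [rcoth, ← mul_div_assoc, one_lt_div (sinh_pos_iff.2 hx)]
  exact sinh_lt_mul_cosh hx

lemma mul_rcoth_lt_of_pos {x : ℝ} (hx : 0 < x) : x * rcoth x < 1 + x ^ 2 / 3 := by
  rw [rcoth, ← mul_div_assoc, div_lt_iff₀ (sinh_pos_iff.2 hx)]
  linarith [three_mul_mul_cosh_lt hx]

lemma one_lt_mul_rcoth {x : ℝ} (hx : x ≠ 0) : 1 < x * rcoth x := by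
  rcases hx.lt_or_gt with hneg | hpos
  · rw [← neg_mul_rcoth_neg]
    exact one_lt_mul_rcoth_of_pos (neg_pos.2 hneg)
  · exact one_lt_mul_rcoth_of_pos hpos

lemma mul_rcoth_lt {x : ℝ} (hx : x ≠ 0) : x * rcoth x < 1 + x ^ 2 / 3 := by
  rcases hx.lt_or_gt with hneg | hpos
  · rw [← neg_mul_rcoth_neg, ← neg_sq]
    exact mul_rcoth_lt_of_pos (neg_pos.2 hneg)
  · exact mul_rcoth_lt_of_pos hpos

lemma Ld_eq {δ : ℝ} (hδ : δ ≠ 0) (n : ℝ) :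
    Ld δ n = 3 / δ ^ 2 * (δ * n * rcoth (δ * n) - 1) := by
  unfold Ld
  field_simp

theorem Ld_bounds (δ n : ℝ) (hδ : 0 < δ) (hn : n ≠ 0) :
    0 < Ld δ n ∧ Ld δ n < n ^ 2 := by
  have hδn : δ * n ≠ 0 := mul_ne_zero hδ.ne' hn
  have hscale : 0 < 3 / δ ^ 2 := by positivity
  rw [Ld_eq hδ.ne']
  constructor
  · exact mul_pos hscale (sub_pos.2 (one_lt_mul_rcoth hδn))
  · calc 3 / δ ^ 2 * (δ * n * rcoth (δ * n) - 1)
        < 3 / δ ^ 2 * ((δ * n) ^ 2 / 3) := by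
          gcongr
          linarith [mul_rcoth_lt hδn]
      _ = n ^ 2 := by field_simp
end

section
/- For every fixed nonzero real n, L_δ(n) = (3/δ)(n·coth(δn) − 1/δ) increases to n² as δ decreases to 0. -/
/-!
The Mittag-Leffler expansion `coth t - 1/t = ∑_{k ≥ 1} 2t / (t² + k²π²)` turns `L_δ(n)` into
`6n² ∑_{k ≥ 1} 1 / (δ²n² + k²π²)`. Every term increases strictly as `δ ↓ 0`, and by uniform
convergence the sum tends to `6n² ∑_{k ≥ 1} 1 / (k²π²) = 6n² ζ(2) / π² = n²`.
-/

open Real Filter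

section

open Complex

theorem ofReal_mul_I_div_pi_mem_integerComplement {t : ℝ} (ht : t ≠ 0) :
    (t * I / π : ℂ) ∈ integerComplement := by
  rintro ⟨m, hm⟩
  have him := congrArg Complex.im hm
  simp only [intCast_im, div_ofReal_im, mul_im, ofReal_re, I_im, ofReal_im, I_re] at him
  exact div_ne_zero ht Real.pi_ne_zero (by simpa using him.symm)

theorem pi_mul_cot_sub_one_div_ofReal_mul_I_div_pi {t : ℝ} (ht : t ≠ 0) :
    π * cot (π * (t * I / π)) - 1 / (t * I / π) = -π * I * (rcoth t - 1 / t : ℝ) := by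
  have hπ : (π : ℂ) ≠ 0 := ofReal_ne_zero.2 Real.pi_ne_zero
  have hsinh : Complex.sinh t ≠ 0 := by exact_mod_cast Real.sinh_ne_zero.2 ht
  rw [mul_div_cancel₀ _ hπ, Complex.cot, cos_mul_I, sin_mul_I, rcoth]
  push_cast
  field_simp
  ring_nf
  rw [I_sq]
  ring

theorem cotTerm_ofReal_mul_I_div_pi {t : ℝ} (ht : t ≠ 0) (k : ℕ) :
    cotTerm (t * I / π) k = -π * I * (2 * t / (t ^ 2 + ((k + 1) * π) ^ 2) : ℝ) := by
  have hx := ofReal_mul_I_div_pi_mem_integerComplement ht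
  have hd : (t : ℂ) ^ 2 + ((k + 1) * π) ^ 2 ≠ 0 := by
    exact_mod_cast (by positivity : (0 : ℝ) < t ^ 2 + ((k + 1) * π) ^ 2).ne'
  have hadd := integerComplement_add_ne_zero hx ((k : ℤ) + 1)
  have hsub := integerComplement_add_ne_zero hx (-((k : ℤ) + 1))
  push_cast at hadd hsub
  rw [← sub_eq_add_neg] at hsub
  have hprod : (t * I / π - (k + 1)) * (t * I / π + (k + 1)) =
      -(t ^ 2 + ((k + 1) * π) ^ 2) / π ^ 2 := by
    field_simp
    ring_nf
    rw [I_sq]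
    ring
  rw [cotTerm, one_div_add_one_div hsub hadd, hprod]
  push_cast
  field_simp
  ring

theorem hasSum_rcoth_sub_inv {t : ℝ} (ht : t ≠ 0) :
    HasSum (fun k : ℕ => 2 * t / (t ^ 2 + ((k + 1) * π) ^ 2)) (rcoth t - 1 / t) := by
  have hx := ofReal_mul_I_div_pi_mem_integerComplement ht
  have h := (summable_cotTerm hx).hasSum
  rw [← cot_series_rep' hx, pi_mul_cot_sub_one_div_ofReal_mul_I_div_pi ht] at h
  simp_rw [cotTerm_ofReal_mul_I_div_pi ht] at h
  have hc : (-π * I : ℂ) ≠ 0 := by simp [Real.pi_ne_zero]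
  exact hasSum_ofReal.1 <| by simpa only [mul_div_cancel_left₀ _ hc] using h.div_const (-π * I)

end

noncomputable def sumInvAddPiSq (a : ℝ) : ℝ := ∑' k : ℕ, 1 / (a + ((k + 1) * π) ^ 2)

theorem hasSum_one_div_succ_mul_pi_sq : HasSum (fun k : ℕ => 1 / ((k + 1) * π) ^ 2) (1 / 6) := by
  have h := ((hasSum_nat_add_iff' 1).2 hasSum_zeta_two).div_const (π ^ 2)
  rw [Finset.sum_range_one, Nat.cast_zero, zero_pow two_ne_zero, div_zero, sub_zero,
    div_div_cancel_left' (pow_ne_zero 2 pi_ne_zero)] at h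
  simpa [mul_pow, div_eq_inv_mul] using h

theorem summable_one_div_add_succ_mul_pi_sq {a : ℝ} (ha : 0 ≤ a) :
    Summable fun k : ℕ => 1 / (a + ((k + 1) * π) ^ 2) :=
  hasSum_one_div_succ_mul_pi_sq.summable.of_nonneg_of_le (fun k => by positivity)
    fun k => one_div_le_one_div_of_le (by positivity) (le_add_of_nonneg_left ha)

theorem sumInvAddPiSq_zero : sumInvAddPiSq 0 = 1 / 6 := by
  simpa [sumInvAddPiSq] using hasSum_one_div_succ_mul_pi_sq.tsum_eq

theorem strictAntiOn_sumInvAddPiSq : StrictAntiOn sumInvAddPiSq (Set.Ici 0) := by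
  intro a (ha : 0 ≤ a) b (hb : 0 ≤ b) hab
  refine (summable_one_div_add_succ_mul_pi_sq hb).tsum_lt_tsum (i := 0) (fun k => ?_) ?_
    (summable_one_div_add_succ_mul_pi_sq ha)
  · exact one_div_le_one_div_of_le (by positivity) (by simpa using hab.le)
  · exact one_div_lt_one_div_of_lt (by positivity) (by simpa using hab)

theorem continuousOn_sumInvAddPiSq : ContinuousOn sumInvAddPiSq (Set.Ici 0) := by
  refine continuousOn_tsum (fun k => ?_) hasSum_one_div_succ_mul_pi_sq.summable
    fun k a (ha : 0 ≤ a) => ?_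
  · exact continuousOn_const.div (by fun_prop) fun a (ha : 0 ≤ a) => by positivity
  · rw [Real.norm_of_nonneg (by positivity)]
    exact one_div_le_one_div_of_le (by positivity) (le_add_of_nonneg_left ha)

theorem Ld_eq_mul_sumInvAddPiSq {δ n : ℝ} (hδ : δ ≠ 0) (hn : n ≠ 0) :
    Ld δ n = 6 * n ^ 2 * sumInvAddPiSq ((δ * n) ^ 2) := by
  have h := ((hasSum_rcoth_sub_inv (mul_ne_zero hδ hn)).mul_left (3 * n / δ)).tsum_eq
  rw [sumInvAddPiSq, ← tsum_mul_left]
  convert h.symm using 1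
  · rw [Ld]; field_simp
  · congr 1; ext k; field_simp; ring

theorem Ld_increases_to_sq (n : ℝ) (hn : n ≠ 0) :
    StrictAntiOn (fun δ : ℝ => Ld δ n) (Set.Ioi (0 : ℝ)) ∧
    Tendsto (fun δ : ℝ => Ld δ n) (nhdsWithin 0 (Set.Ioi 0)) (nhds (n ^ 2)) := by
  have hLd : ∀ δ ∈ Set.Ioi (0 : ℝ), Ld δ n = 6 * n ^ 2 * sumInvAddPiSq ((δ * n) ^ 2) :=
    fun δ hδ => Ld_eq_mul_sumInvAddPiSq (ne_of_gt hδ) hn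
  have hsq {a b : ℝ} (ha : 0 < a) (hab : a < b) : (a * n) ^ 2 < (b * n) ^ 2 := by
    rw [mul_pow, mul_pow]
    exact mul_lt_mul_of_pos_right (pow_lt_pow_left₀ hab ha.le two_ne_zero) (by positivity)
  constructor
  · intro a ha b hb hab
    simp only [hLd a ha, hLd b hb]
    exact mul_lt_mul_of_pos_left
      (strictAntiOn_sumInvAddPiSq (Set.mem_Ici.2 (sq_nonneg _)) (Set.mem_Ici.2 (sq_nonneg _))
        (hsq ha hab)) (by positivity)
  · have hcont : ContinuousWithinAt (fun δ : ℝ => 6 * n ^ 2 * sumInvAddPiSq ((δ * n) ^ 2))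
        (Set.Ioi 0) 0 :=
      continuousWithinAt_const.mul <|
        (continuousOn_sumInvAddPiSq.continuousWithinAt Set.self_mem_Ici).comp_of_eq
          (by fun_prop) (fun δ _ => Set.mem_Ici.2 (sq_nonneg (δ * n))) (by simp)
    have hvalue : 6 * n ^ 2 * sumInvAddPiSq ((0 * n) ^ 2) = n ^ 2 := by
      rw [zero_mul, zero_pow two_ne_zero, sumInvAddPiSq_zero]; ring
    exact (hvalue ▸ hcont.tendsto).congr'
      (eventually_nhdsWithin_of_forall fun δ hδ => (hLd δ hδ).symm)
end

section
/- For every δ > 0: if |n| ≥ 1/δ then |p_δ(n)| ∼ n², |p_δ'(n)| ∼ |n| and |p_δ''(n)| ∼ 1; if 0 < |n| ≤ 1/δ then |p_δ(n)| ∼ δ|n|³, |p_δ'(n)| ∼ δn² and |p_δ''(n)| ∼ δ|n|, with implicit constants independent of δ and n. -/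
open Real

noncomputable def pd (δ n : ℝ) : ℝ := n * (n * rcoth (δ * n) - 1 / δ)

/-
Scaling reduces everything to `δ = 1`: `p_δ(n) = p_1(δn) / δ²`, `p_δ'(n) = p_1'(δn) / δ` and
`p_δ''(n) = p_1''(δn)`, and `p_1` is odd, so it suffices to bound `p_1`, `p_1'`, `p_1''` at
`y = δ|n| > 0`. Writing `p_1(y) = y num₀(y) / sinh y`, `p_1'(y) = num₁(y) / sinh² y` and
`p_1''(y) = 2 num₂(y) / sinh³ y`, each numerator vanishes at `0` and has an explicit nonnegative
derivative (`y sinh y`, `4 y sinh² y`, `sinh y (3 sinh² y + y²)`). For `y ≤ 1`, integrating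
`y ≤ sinh y ≤ 2y` shows that the numerators are of order `y³`, `y⁴`, `y⁴`; for `y ≥ 1`,
`cosh y ≤ 2 sinh y` and a comparison of derivatives on `[1, y]` show that they are of order
`y sinh y`, `y sinh² y`, `sinh³ y`.
-/

open Set

lemma le_of_hasDerivAt_le {f g f' g' : ℝ → ℝ} {a b : ℝ} (hab : a ≤ b)
    (hf : ∀ x, HasDerivAt f (f' x) x) (hg : ∀ x, HasDerivAt g (g' x) x) (ha : f a ≤ g a)
    (h : ∀ x ∈ Ico a b, f' x ≤ g' x) : f b ≤ g b :=
  image_le_of_deriv_right_le_deriv_boundary (fun x _ => (hf x).continuousAt.continuousWithinAt)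
    (fun x _ => (hf x).hasDerivWithinAt) ha (fun x _ => (hg x).continuousAt.continuousWithinAt)
    (fun x _ => (hg x).hasDerivWithinAt) h ⟨hab, le_rfl⟩

lemma bounds_of_hasDerivAt_pow_bounds {F F' : ℝ → ℝ} {c C b y : ℝ} (k : ℕ)
    (hF : ∀ t, HasDerivAt F (F' t) t) (h0 : F 0 = 0)
    (hF' : ∀ t ∈ Ico 0 b, c * t ^ k ≤ F' t ∧ F' t ≤ C * t ^ k) (hy : y ∈ Icc 0 b) :
    c * (y ^ (k + 1) / (k + 1)) ≤ F y ∧ F y ≤ C * (y ^ (k + 1) / (k + 1)) := by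
  have hpow (a t : ℝ) :
      HasDerivAt (fun t => a * (t ^ (k + 1) / (k + 1))) (a * t ^ k) t := by
    refine (((hasDerivAt_pow (k + 1) t).div_const ((k : ℝ) + 1)).const_mul a).congr_deriv ?_
    push_cast
    field_simp
  constructor
  · exact le_of_hasDerivAt_le hy.1 (hpow c) hF (by simp [h0])
      fun t ht => (hF' t ⟨ht.1, ht.2.trans_le hy.2⟩).1
  · exact le_of_hasDerivAt_le hy.1 hF (hpow C) (by simp [h0])
      fun t ht => (hF' t ⟨ht.1, ht.2.trans_le hy.2⟩).2

lemma mul_abs_of_pos {a : ℝ} (ha : 0 < a) (b : ℝ) : a * |b| = |a * b| := by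
  rw [abs_mul, abs_of_pos ha]

section Parity

variable {𝕜 F : Type*} [NontriviallyNormedField 𝕜] [NormedAddCommGroup F] [NormedSpace 𝕜 F]
  {f : 𝕜 → F}

lemma Function.Odd.deriv (hf : f.Odd) : (deriv f).Even := fun x => by
  have h := deriv_comp_neg (f := f) (x := x)
  rw [show (fun x => f (-x)) = -f from funext hf, deriv.neg, neg_inj] at h
  exact h.symm

lemma Function.Even.deriv (hf : f.Even) : (deriv f).Odd := fun x => by
  have h := deriv_comp_neg (f := f) (x := x)
  rw [show (fun x => f (-x)) = f from funext hf] at h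
  rw [h, neg_neg]

end Parity

section ParityAbs

variable {α β : Type*} [AddGroup α] [LinearOrder α] {f : α → β}

lemma Function.Odd.abs_apply_abs [AddGroup β] [Lattice β] (hf : f.Odd) (x : α) :
    |f (|x|)| = |f x| := by
  rcases abs_choice x with h | h <;> simp [h, hf.eq]

lemma Function.Even.apply_abs (hf : f.Even) (x : α) : f (|x|) = f x := by
  rcases abs_choice x with h | h <;> simp [h, hf.eq]

end ParityAbs

namespace Real

lemma cosh_le_two {y : ℝ} (hy : |y| ≤ 1) : cosh y ≤ 2 := by
  have h₁ : cosh y ≤ cosh 1 := cosh_le_cosh.mpr (by simpa using hy)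
  have h₂ : exp 1 < 2.7182818286 := exp_one_lt_d9
  have h₃ : exp (-1) ≤ 1 := exp_le_one_iff.mpr (by norm_num)
  rw [cosh_eq 1] at h₁
  linarith

lemma sinh_le_two_mul {y : ℝ} (hy : y ∈ Icc 0 1) : sinh y ≤ 2 * y := by
  simpa using le_of_hasDerivAt_le hy.1 hasDerivAt_sinh (fun t => (hasDerivAt_id t).const_mul 2)
    (by simp) fun t ht => by
      simpa using cosh_le_two (abs_le.mpr ⟨by linarith [ht.1], ht.2.le.trans hy.2⟩)

lemma sinh_one_le_two : sinh 1 ≤ 2 := by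
  simpa using sinh_le_two_mul (y := 1) ⟨zero_le_one, le_rfl⟩

lemma cosh_le_two_mul_sinh {y : ℝ} (hy : 1 ≤ y) : cosh y ≤ 2 * sinh y := by
  have h₁ : y ≤ sinh y := self_le_sinh_iff.mpr (by linarith)
  have h₂ : exp (-y) ≤ 1 := exp_le_one_iff.mpr (by linarith)
  linarith [cosh_sub_sinh y]

end Real

namespace ILW

noncomputable def num₀ (y : ℝ) : ℝ := y * cosh y - sinh y

noncomputable def num₁ (y : ℝ) : ℝ := 2 * y * cosh y * sinh y - y ^ 2 - sinh y ^ 2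

noncomputable def num₂ (y : ℝ) : ℝ := cosh y * sinh y ^ 2 - 2 * y * sinh y + y ^ 2 * cosh y

lemma hasDerivAt_num₀ (y : ℝ) : HasDerivAt num₀ (y * sinh y) y :=
  (((hasDerivAt_id y).mul (hasDerivAt_cosh y)).sub (hasDerivAt_sinh y)).congr_deriv
    (by simp)

lemma hasDerivAt_num₁ (y : ℝ) : HasDerivAt num₁ (4 * y * sinh y ^ 2) y := by
  have := (((((hasDerivAt_id y).const_mul 2).mul (hasDerivAt_cosh y)).mul (hasDerivAt_sinh y)).sub
    (hasDerivAt_pow 2 y)).sub ((hasDerivAt_sinh y).pow 2)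
  refine this.congr_deriv ?_
  simp only [id, Pi.mul_apply, Nat.cast_ofNat]
  linear_combination (2 * y) * cosh_sq_sub_sinh_sq y

lemma hasDerivAt_num₂ (y : ℝ) : HasDerivAt num₂ (sinh y * (3 * sinh y ^ 2 + y ^ 2)) y := by
  have := ((((hasDerivAt_cosh y).mul ((hasDerivAt_sinh y).pow 2)).sub
    (((hasDerivAt_id y).const_mul 2).mul (hasDerivAt_sinh y))).add
    ((hasDerivAt_pow 2 y).mul (hasDerivAt_cosh y)))
  refine this.congr_deriv ?_
  simp only [id, Pi.pow_apply, Nat.cast_ofNat]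
  linear_combination (2 * sinh y) * cosh_sq_sub_sinh_sq y

lemma pd_one_eq : pd 1 = fun y => y * num₀ y / sinh y := by
  funext y
  rcases eq_or_ne y 0 with rfl | hy
  · simp [pd]
  · have : sinh y ≠ 0 := sinh_ne_zero.mpr hy
    simp only [pd, rcoth, num₀, one_mul]
    field_simp

lemma hasDerivAt_pd_one {y : ℝ} (hy : y ≠ 0) : HasDerivAt (pd 1) (num₁ y / sinh y ^ 2) y := by
  have hs : sinh y ≠ 0 := sinh_ne_zero.mpr hy
  rw [pd_one_eq]
  refine (((hasDerivAt_id y).mul (hasDerivAt_num₀ y)).div (hasDerivAt_sinh y) hs).congr_deriv ?_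
  simp only [id, Pi.mul_apply, num₁, num₀]
  field_simp
  linear_combination (-y ^ 2) * cosh_sq_sub_sinh_sq y

lemma deriv_deriv_pd_one {y : ℝ} (hy : y ≠ 0) :
    deriv (deriv (pd 1)) y = 2 * num₂ y / sinh y ^ 3 := by
  have hs : sinh y ≠ 0 := sinh_ne_zero.mpr hy
  have hderiv : deriv (pd 1) =ᶠ[nhds y] fun t => num₁ t / sinh t ^ 2 := by
    filter_upwards [isOpen_ne.mem_nhds hy] with t ht using (hasDerivAt_pd_one ht).deriv
  rw [hderiv.deriv_eq]
  refine (((hasDerivAt_num₁ y).div ((hasDerivAt_sinh y).pow 2) (pow_ne_zero 2 hs)).deriv).trans ?_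
  simp only [Pi.pow_apply, num₁, num₂, Nat.cast_ofNat]
  field_simp
  linear_combination (-4 * y * sinh y ^ 2) * cosh_sq_sub_sinh_sq y

lemma pd_eq_comp {δ : ℝ} (hδ : δ ≠ 0) : pd δ = fun n => pd 1 (δ * n) / δ ^ 2 := by
  funext n
  simp only [pd, one_mul]
  field_simp

lemma deriv_pd {δ : ℝ} (hδ : δ ≠ 0) :
    deriv (pd δ) = fun n => deriv (pd 1) (δ * n) / δ := by
  funext n
  rw [pd_eq_comp hδ, deriv_div_const, deriv_comp_mul_left, smul_eq_mul]
  field_simp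

lemma deriv_deriv_pd {δ : ℝ} (hδ : δ ≠ 0) :
    deriv (deriv (pd δ)) = fun n => deriv (deriv (pd 1)) (δ * n) := by
  funext n
  rw [deriv_pd hδ, deriv_div_const, deriv_comp_mul_left, smul_eq_mul]
  field_simp

lemma pd_one_odd : (pd 1).Odd := fun y => by
  simp only [pd, rcoth, one_mul, cosh_neg, sinh_neg, div_neg]
  ring

lemma num₀_bounds_of_le_one {y : ℝ} (hy : y ∈ Icc 0 1) :
    y ^ 3 / 3 ≤ num₀ y ∧ num₀ y ≤ 2 * y ^ 3 / 3 := by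
  have := bounds_of_hasDerivAt_pow_bounds (c := 1) (C := 2) 2 hasDerivAt_num₀
    (by simp [num₀]) (fun t ht => by
      have h₁ := mul_le_mul_of_nonneg_left (self_le_sinh_iff.mpr ht.1) ht.1
      have h₂ := mul_le_mul_of_nonneg_left (sinh_le_two_mul ⟨ht.1, ht.2.le⟩) ht.1
      constructor <;> linarith) hy
  norm_num at this
  constructor <;> linarith

lemma num₁_bounds_of_le_one {y : ℝ} (hy : y ∈ Icc 0 1) :
    y ^ 4 ≤ num₁ y ∧ num₁ y ≤ 4 * y ^ 4 := by
  have := bounds_of_hasDerivAt_pow_bounds (c := 4) (C := 16) 3 hasDerivAt_num₁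
    (by simp [num₁]) (fun t ht => by
      have h₁ := pow_le_pow_left₀ ht.1 (self_le_sinh_iff.mpr ht.1) 2
      have h₂ :=
        pow_le_pow_left₀ (sinh_nonneg_iff.mpr ht.1) (sinh_le_two_mul ⟨ht.1, ht.2.le⟩) 2
      constructor <;> nlinarith [ht.1]) hy
  norm_num at this
  constructor <;> linarith

lemma num₂_bounds_of_le_one {y : ℝ} (hy : y ∈ Icc 0 1) :
    y ^ 4 ≤ num₂ y ∧ num₂ y ≤ 13 / 2 * y ^ 4 := by
  have := bounds_of_hasDerivAt_pow_bounds (c := 4) (C := 26) 3 hasDerivAt_num₂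
    (by simp [num₂]) (fun t ht => by
      have h₁ := self_le_sinh_iff.mpr ht.1
      have h₂ := sinh_le_two_mul ⟨ht.1, ht.2.le⟩
      have h₃ := pow_le_pow_left₀ ht.1 h₁ 2
      have h₄ := pow_le_pow_left₀ (sinh_nonneg_iff.mpr ht.1) h₂ 2
      constructor <;> nlinarith [ht.1]) hy
  norm_num at this
  constructor <;> linarith

lemma num₀_bounds_of_one_le {y : ℝ} (hy : 1 ≤ y) :
    y * sinh y / 6 ≤ num₀ y ∧ num₀ y ≤ 2 * (y * sinh y) := by
  have hs : 0 ≤ sinh y := sinh_nonneg_iff.mpr (by linarith)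
  refine ⟨le_of_hasDerivAt_le hy
    (fun t => ((hasDerivAt_id t).mul (hasDerivAt_sinh t)).div_const 6) hasDerivAt_num₀ ?_ ?_,
    ?_⟩
  · have := (num₀_bounds_of_le_one ⟨zero_le_one, le_rfl⟩).1
    norm_num at this ⊢
    linarith [sinh_one_le_two]
  · intro t ht
    have h₁ := cosh_le_two_mul_sinh ht.1
    have h₂ : 0 ≤ sinh t := sinh_nonneg_iff.mpr (by linarith [ht.1])
    simp only [id, one_mul]
    nlinarith [ht.1]
  · simp only [num₀]
    nlinarith [cosh_le_two_mul_sinh hy]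

lemma num₁_bounds_of_one_le {y : ℝ} (hy : 1 ≤ y) :
    y * sinh y ^ 2 / 4 ≤ num₁ y ∧ num₁ y ≤ 4 * (y * sinh y ^ 2) := by
  have hs : 0 ≤ sinh y := sinh_nonneg_iff.mpr (by linarith)
  refine ⟨le_of_hasDerivAt_le hy
    (fun t => (((hasDerivAt_id t).mul ((hasDerivAt_sinh t).pow 2)).div_const 4))
    hasDerivAt_num₁ ?_ ?_, ?_⟩
  · have := (num₁_bounds_of_le_one ⟨zero_le_one, le_rfl⟩).1
    norm_num at this ⊢
    nlinarith [sinh_one_le_two, sinh_pos_iff.mpr zero_lt_one]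
  · intro t ht
    have h₁ := cosh_le_two_mul_sinh ht.1
    have h₂ : 0 ≤ sinh t := sinh_nonneg_iff.mpr (by linarith [ht.1])
    simp only [id, one_mul, Pi.pow_apply, Nat.cast_ofNat, Nat.reduceSub, pow_one]
    have h₃ : 0 ≤ sinh t * t := mul_nonneg h₂ (by linarith [ht.1])
    nlinarith [ht.1, mul_le_mul_of_nonneg_left h₁ h₃]
  · have h₁ := cosh_le_two_mul_sinh hy
    simp only [num₁]
    nlinarith [mul_le_mul_of_nonneg_left h₁ (mul_nonneg hs (by linarith : (0:ℝ) ≤ y))]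

lemma num₂_bounds_of_one_le {y : ℝ} (hy : 1 ≤ y) :
    sinh y ^ 3 / 8 ≤ num₂ y ∧ num₂ y ≤ 4 * sinh y ^ 3 := by
  have hs : 0 ≤ sinh y := sinh_nonneg_iff.mpr (by linarith)
  refine ⟨le_of_hasDerivAt_le hy
    (fun t => (((hasDerivAt_sinh t).pow 3).div_const 8)) hasDerivAt_num₂ ?_ ?_, ?_⟩
  · have := (num₂_bounds_of_le_one ⟨zero_le_one, le_rfl⟩).1
    have h₁ := pow_le_pow_left₀ (sinh_pos_iff.mpr zero_lt_one).le sinh_one_le_two 3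
    norm_num at this h₁ ⊢
    linarith
  · intro t ht
    have h₁ := cosh_le_two_mul_sinh ht.1
    have h₂ : 0 ≤ sinh t := sinh_nonneg_iff.mpr (by linarith [ht.1])
    simp only [Nat.cast_ofNat, Nat.reduceSub]
    nlinarith [mul_le_mul_of_nonneg_left h₁ (pow_nonneg h₂ 2), pow_nonneg h₂ 3,
      mul_nonneg h₂ (sq_nonneg t)]
  · have h₁ := cosh_le_two_mul_sinh hy
    have h₂ := self_le_sinh_iff.mpr (by linarith : (0:ℝ) ≤ y)
    have h₃ := pow_le_pow_left₀ (by linarith) h₂ 2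
    simp only [num₂]
    nlinarith [mul_le_mul_of_nonneg_left h₁ (pow_nonneg hs 2),
      mul_le_mul_of_nonneg_left h₁ (sq_nonneg y),
      mul_le_mul_of_nonneg_left h₃ (by linarith : (0 : ℝ) ≤ 2 * sinh y),
      mul_nonneg hs (by linarith : (0 : ℝ) ≤ y)]

lemma pd_one_bounds_of_le_one {y : ℝ} (hy : y ∈ Ioc 0 1) :
    (y ^ 3 / 6 ≤ pd 1 y ∧ pd 1 y ≤ 2 * y ^ 3 / 3) ∧
    (y ^ 2 / 4 ≤ deriv (pd 1) y ∧ deriv (pd 1) y ≤ 4 * y ^ 2) ∧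
    (y / 4 ≤ deriv (deriv (pd 1)) y ∧ deriv (deriv (pd 1)) y ≤ 13 * y) := by
  have hy' : y ∈ Icc 0 1 := Ioc_subset_Icc_self hy
  have hs₁ : y ≤ sinh y := self_le_sinh_iff.mpr hy'.1
  have hs₂ : sinh y ≤ 2 * y := sinh_le_two_mul hy'
  have hs : 0 < sinh y := sinh_pos_iff.mpr hy.1
  have hs2₁ := pow_le_pow_left₀ hy'.1 hs₁ 2
  have hs2₂ := pow_le_pow_left₀ hs.le hs₂ 2
  have hs3₁ := pow_le_pow_left₀ hy'.1 hs₁ 3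
  have hs3₂ := pow_le_pow_left₀ hs.le hs₂ 3
  obtain ⟨h₀, h₀'⟩ := num₀_bounds_of_le_one hy'
  obtain ⟨h₁, h₁'⟩ := num₁_bounds_of_le_one hy'
  obtain ⟨h₂, h₂'⟩ := num₂_bounds_of_le_one hy'
  rw [(hasDerivAt_pd_one hy.1.ne').deriv, deriv_deriv_pd_one hy.1.ne', congrFun pd_one_eq y]
  simp only [le_div_iff₀ hs, div_le_iff₀ hs, le_div_iff₀ (pow_pos hs 2),
    div_le_iff₀ (pow_pos hs 2), le_div_iff₀ (pow_pos hs 3), div_le_iff₀ (pow_pos hs 3)]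
  refine ⟨⟨?_, ?_⟩, ⟨?_, ?_⟩, ?_, ?_⟩ <;> nlinarith [hy.1]

lemma pd_one_bounds_of_one_le {y : ℝ} (hy : 1 ≤ y) :
    (y ^ 2 / 6 ≤ pd 1 y ∧ pd 1 y ≤ 2 * y ^ 2) ∧
    (y / 4 ≤ deriv (pd 1) y ∧ deriv (pd 1) y ≤ 4 * y) ∧
    (1 / 4 ≤ deriv (deriv (pd 1)) y ∧ deriv (deriv (pd 1)) y ≤ 8) := by
  have hy₀ : y ≠ 0 := by positivity
  have hs : 0 < sinh y := sinh_pos_iff.mpr (by linarith)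
  obtain ⟨h₀, h₀'⟩ := num₀_bounds_of_one_le hy
  obtain ⟨h₁, h₁'⟩ := num₁_bounds_of_one_le hy
  obtain ⟨h₂, h₂'⟩ := num₂_bounds_of_one_le hy
  rw [(hasDerivAt_pd_one hy₀).deriv, deriv_deriv_pd_one hy₀, congrFun pd_one_eq y]
  simp only [le_div_iff₀ hs, div_le_iff₀ hs, le_div_iff₀ (pow_pos hs 2),
    div_le_iff₀ (pow_pos hs 2), le_div_iff₀ (pow_pos hs 3), div_le_iff₀ (pow_pos hs 3)]
  refine ⟨⟨?_, ?_⟩, ⟨?_, ?_⟩, ?_, ?_⟩ <;> nlinarith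

lemma abs_pd {δ : ℝ} (hδ : 0 < δ) (n : ℝ) : |pd δ n| = |pd 1 (δ * |n|)| / δ ^ 2 := by
  rw [pd_eq_comp hδ.ne', abs_div, abs_of_pos (pow_pos hδ 2), mul_abs_of_pos hδ,
    pd_one_odd.abs_apply_abs]

lemma abs_deriv_pd {δ : ℝ} (hδ : 0 < δ) (n : ℝ) :
    |deriv (pd δ) n| = |deriv (pd 1) (δ * |n|)| / δ := by
  rw [deriv_pd hδ.ne', abs_div, abs_of_pos hδ, mul_abs_of_pos hδ, pd_one_odd.deriv.apply_abs]

lemma abs_deriv_deriv_pd {δ : ℝ} (hδ : 0 < δ) (n : ℝ) :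
    |deriv (deriv (pd δ)) n| = |deriv (deriv (pd 1)) (δ * |n|)| := by
  rw [deriv_deriv_pd hδ.ne', mul_abs_of_pos hδ, pd_one_odd.deriv.deriv.abs_apply_abs]

end ILW

open ILW in
theorem pd_derivative_bounds :
    ∃ c C : ℝ, 0 < c ∧ 0 < C ∧ ∀ δ : ℝ, 0 < δ → ∀ n : ℝ,
      ((1 / δ ≤ |n| →
        (c * n ^ 2 ≤ |pd δ n| ∧ |pd δ n| ≤ C * n ^ 2) ∧
        (c * |n| ≤ |deriv (pd δ) n| ∧ |deriv (pd δ) n| ≤ C * |n|) ∧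
        (c ≤ |deriv (deriv (pd δ)) n| ∧ |deriv (deriv (pd δ)) n| ≤ C)) ∧
      (n ≠ 0 → |n| ≤ 1 / δ →
        (c * (δ * |n| ^ 3) ≤ |pd δ n| ∧ |pd δ n| ≤ C * (δ * |n| ^ 3)) ∧
        (c * (δ * n ^ 2) ≤ |deriv (pd δ) n| ∧ |deriv (pd δ) n| ≤ C * (δ * n ^ 2)) ∧
        (c * (δ * |n|) ≤ |deriv (deriv (pd δ)) n| ∧
          |deriv (deriv (pd δ)) n| ≤ C * (δ * |n|)))) := by
  refine ⟨1 / 6, 13, by norm_num, by norm_num, fun δ hδ n => ⟨fun hn => ?_, fun hn₀ hn => ?_⟩⟩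
  all_goals
    rw [abs_pd hδ, abs_deriv_pd hδ, abs_deriv_deriv_pd hδ, ← sq_abs n,
      div_le_iff₀ (pow_pos hδ 2), le_div_iff₀ (pow_pos hδ 2), div_le_iff₀ hδ, le_div_iff₀ hδ]
  · have hy : 1 ≤ δ * |n| := by rwa [div_le_iff₀' hδ] at hn
    obtain ⟨⟨h₁, h₂⟩, ⟨h₃, h₄⟩, h₅, h₆⟩ := pd_one_bounds_of_one_le hy
    rw [abs_of_pos (a := pd 1 _) (by nlinarith), abs_of_pos (a := deriv (pd 1) _) (by linarith),
      abs_of_pos (a := deriv (deriv (pd 1)) _) (by linarith)]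
    refine ⟨⟨?_, ?_⟩, ⟨?_, ?_⟩, ?_, ?_⟩ <;> linarith
  · have hy : δ * |n| ∈ Ioc 0 1 := ⟨by positivity, by rwa [le_div_iff₀' hδ] at hn⟩
    obtain ⟨⟨h₁, h₂⟩, ⟨h₃, h₄⟩, h₅, h₆⟩ := pd_one_bounds_of_le_one hy
    rw [abs_of_pos (a := pd 1 _) ((by positivity : (0:ℝ) < _).trans_le h₁),
      abs_of_pos (a := deriv (pd 1) _) ((by positivity : (0:ℝ) < _).trans_le h₃),
      abs_of_pos (a := deriv (deriv (pd 1)) _) ((by positivity : (0:ℝ) < _).trans_le h₅)]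
    refine ⟨⟨?_, ?_⟩, ⟨?_, ?_⟩, ?_, ?_⟩ <;> nlinarith
end

section
/- For 0 < δ, γ ≤ ∞ and all integers n and reals τ, the modulation weights of the ILW dispersions with different depths satisfy ⟨τ − p_δ(n)⟩ ≲ ⟨τ − p_γ(n)⟩ + (1/δ + 1/γ)⟨n⟩, with implicit constant independent of δ, γ, n, τ. -/
/-!
Write `p_δ(n) = n · (n coth(δn) − 1/δ)`. Since `t ≤ t coth t ≤ t + 1` for `t > 0`, the even function
`n coth(δn)` lies between `|n|` and `|n| + 1/δ`, so `|p_δ(n) − n|n|| ≤ |n|/δ`: every ILW symbol is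
within `|n|/δ` of the Benjamin–Ono symbol. As `⟨·⟩` is 1-Lipschitz, the comparison holds with constant 1.
-/

open Real

/-- ILW dispersion with depth `δ ∈ (0, ∞]`; `δ = ∞` gives the Benjamin–Ono symbol `n|n|`. -/
noncomputable def pExt (δ : ENNReal) (n : ℝ) : ℝ :=
  if δ = ⊤ then n * |n| else n * (n * rcoth (δ.toReal * n) - 1 / δ.toReal)

noncomputable def jb (x : ℝ) : ℝ := Real.sqrt (1 + x ^ 2)

lemma rcoth_neg (x : ℝ) : rcoth (-x) = -rcoth x := by
  rw [rcoth, rcoth, cosh_neg, sinh_neg, div_neg]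

lemma one_le_rcoth {x : ℝ} (hx : 0 < x) : 1 ≤ rcoth x := by
  have hsinh : 0 < sinh x := sinh_pos_iff.2 hx
  have hgap : cosh x - sinh x = exp (-x) := cosh_sub_sinh x
  rw [rcoth, le_div_iff₀ hsinh]
  linarith [exp_pos (-x)]

lemma mul_rcoth_le_add_one {x : ℝ} (hx : 0 < x) : x * rcoth x ≤ x + 1 := by
  have hsinh : 0 < sinh x := sinh_pos_iff.2 hx
  have hgap : cosh x - sinh x = exp (-x) := cosh_sub_sinh x
  -- `x (cosh x − sinh x) = x e^{−x} ≤ x ≤ sinh x`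
  have hexp : exp (-x) ≤ 1 := exp_le_one_iff.2 (by linarith)
  have hself : x ≤ sinh x := self_le_sinh_iff.2 hx.le
  rw [rcoth, ← mul_div_assoc, div_le_iff₀ hsinh]
  nlinarith

lemma mul_rcoth_mul_abs (d x : ℝ) : x * rcoth (d * x) = |x| * rcoth (d * |x|) := by
  rcases abs_choice x with h | h <;> rw [h]
  rw [mul_neg, rcoth_neg]
  ring

lemma mul_rcoth_mul_mem_Icc {d : ℝ} (hd : 0 < d) (x : ℝ) :
    x * rcoth (d * x) ∈ Set.Icc |x| (|x| + 1 / d) := by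
  rw [mul_rcoth_mul_abs]
  rcases (abs_nonneg x).eq_or_lt with h | h
  · simp [← h, hd.le]
  · have hdx : 0 < d * |x| := mul_pos hd h
    have hscaled : |x| * rcoth (d * |x|) = d * |x| * rcoth (d * |x|) / d := by
      field_simp
    rw [hscaled, Set.mem_Icc, le_div_iff₀ hd, div_le_iff₀ hd]
    constructor
    · nlinarith [one_le_rcoth hdx]
    · have := mul_rcoth_le_add_one hdx
      field_simp
      linarith

lemma abs_pExt_sub_pExt_top_le {δ : ENNReal} (hδ : δ ≠ 0) (x : ℝ) :
    |pExt δ x - pExt ⊤ x| ≤ |x| * δ⁻¹.toReal := by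
  rcases eq_or_ne δ ⊤ with h | h
  · simp [h]
  · have hd : 0 < δ.toReal := ENNReal.toReal_pos hδ h
    obtain ⟨hlow, hup⟩ := mul_rcoth_mul_mem_Icc hd x
    have hrw : pExt δ x - pExt ⊤ x = x * (x * rcoth (δ.toReal * x) - |x| - 1 / δ.toReal) := by
      rw [pExt, if_neg h, pExt, if_pos rfl]
      ring
    rw [hrw, abs_mul, ENNReal.toReal_inv, ← one_div]
    gcongr
    rw [abs_le]
    constructor <;> linarith

lemma abs_pExt_sub_pExt_le {δ γ : ENNReal} (hδ : δ ≠ 0) (hγ : γ ≠ 0) (x : ℝ) :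
    |pExt δ x - pExt γ x| ≤ (δ⁻¹ + γ⁻¹).toReal * |x| := by
  rw [ENNReal.toReal_add (ENNReal.inv_ne_top.2 hδ) (ENNReal.inv_ne_top.2 hγ)]
  calc |pExt δ x - pExt γ x|
      ≤ |pExt δ x - pExt ⊤ x| + |pExt ⊤ x - pExt γ x| := abs_sub_le _ _ _
    _ = |pExt δ x - pExt ⊤ x| + |pExt γ x - pExt ⊤ x| := by rw [abs_sub_comm (pExt ⊤ x)]
    _ ≤ |x| * δ⁻¹.toReal + |x| * γ⁻¹.toReal :=
        add_le_add (abs_pExt_sub_pExt_top_le hδ x) (abs_pExt_sub_pExt_top_le hγ x)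
    _ = (δ⁻¹.toReal + γ⁻¹.toReal) * |x| := by ring

lemma jb_eq_norm (x : ℝ) : jb x = ‖(⟨1, x⟩ : ℂ)‖ := by
  rw [jb, Complex.norm_eq_sqrt_sq_add_sq, one_pow]

lemma abs_le_jb (x : ℝ) : |x| ≤ jb x := by
  simpa [jb_eq_norm] using Complex.abs_im_le_norm ⟨1, x⟩

lemma jb_le_jb_add_abs_sub (a b : ℝ) : jb a ≤ jb b + |a - b| := by
  have hdiff : (⟨1, a⟩ : ℂ) - ⟨1, b⟩ = ((a - b : ℝ) : ℂ) * Complex.I := by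
    apply Complex.ext <;> simp
  have := norm_sub_norm_le (⟨1, a⟩ : ℂ) ⟨1, b⟩
  rw [hdiff, norm_mul, Complex.norm_I, mul_one, Complex.norm_real, Real.norm_eq_abs] at this
  rw [jb_eq_norm, jb_eq_norm]
  linarith

theorem modulation_comparison :
    ∃ C : ℝ, 0 < C ∧ ∀ δ γ : ENNReal, δ ≠ 0 → γ ≠ 0 →
      ∀ n : ℤ, ∀ τ : ℝ,
        jb (τ - pExt δ (n : ℝ)) ≤
          C * (jb (τ - pExt γ (n : ℝ)) + (δ⁻¹ + γ⁻¹).toReal * jb (n : ℝ)) := by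
  refine ⟨1, one_pos, fun δ γ hδ hγ n τ => ?_⟩
  calc jb (τ - pExt δ n)
      ≤ jb (τ - pExt γ n) + |pExt δ n - pExt γ n| := by
        simpa [abs_sub_comm] using jb_le_jb_add_abs_sub (τ - pExt δ n) (τ - pExt γ n)
    _ ≤ jb (τ - pExt γ n) + (δ⁻¹ + γ⁻¹).toReal * jb n := by
        gcongr
        exact (abs_pExt_sub_pExt_le hδ hγ n).trans (by gcongr; exact abs_le_jb _)
    _ = 1 * (jb (τ - pExt γ n) + (δ⁻¹ + γ⁻¹).toReal * jb n) := (one_mul _).symm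
end

section
/- Let {ω_N}_{N dyadic} be an increasing sequence of positive numbers with ω_N ≤ ω_{2N} ≤ κ·ω_N for all N ≥ 1 (κ > 1) and ω_N → ∞. Then for any 1 < κ' < κ there exists a dyadic sequence {ω̃_N} with ω̃_N ≤ ω_N, ω̃_N ≤ ω̃_{2N} ≤ κ'·ω̃_N for all N ≥ 1, and ω̃_N → ∞. -/
/-!
`cappedGrowth ω κ'` is `k ↦ min_{j ≤ k} κ'^(k - j) ω j`, the largest sequence below `ω` whose
growth ratio is at most `κ'`. It is increasing because `ω` is, and it tends to infinity: once `ω`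
stays above a level `M`, it grows geometrically with ratio `κ'` until it reaches `M`.
-/

open Filter

noncomputable def cappedGrowth (ω : ℕ → ℝ) (c : ℝ) : ℕ → ℝ
  | 0 => ω 0
  | k + 1 => min (ω (k + 1)) (c * cappedGrowth ω c k)

namespace cappedGrowth

variable {ω : ℕ → ℝ} {c : ℝ}

theorem le (k : ℕ) : cappedGrowth ω c k ≤ ω k := by
  cases k with
  | zero => exact le_rfl
  | succ k => exact min_le_left _ _

theorem succ_le_mul (k : ℕ) : cappedGrowth ω c (k + 1) ≤ c * cappedGrowth ω c k :=
  min_le_right _ _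

theorem pos (hc : 0 < c) (hpos : ∀ k, 0 < ω k) (k : ℕ) : 0 < cappedGrowth ω c k := by
  induction k with
  | zero => exact hpos 0
  | succ k ih => exact lt_min (hpos (k + 1)) (mul_pos hc ih)

theorem monotone (hc : 1 ≤ c) (hpos : ∀ k, 0 < ω k) (hmono : Monotone ω) :
    Monotone (cappedGrowth ω c) := by
  refine monotone_nat_of_le_succ fun k => ?_
  have hk := pos (zero_lt_one.trans_le hc) hpos k
  exact le_min ((le k).trans (hmono k.le_succ)) (le_mul_of_one_le_left hk.le hc)

theorem min_pow_mul_le {M : ℝ} {K : ℕ} (hc : 1 ≤ c) (hM : 0 ≤ M)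
    (hK : ∀ j, K ≤ j → M ≤ ω j) (n : ℕ) :
    min M (c ^ n * cappedGrowth ω c K) ≤ cappedGrowth ω c (K + n) := by
  induction n with
  | zero => simp
  | succ n ih =>
    refine le_min ((min_le_left _ _).trans (hK (K + n + 1) (by omega))) ?_
    calc min M (c ^ (n + 1) * cappedGrowth ω c K)
        ≤ min (c * M) (c * (c ^ n * cappedGrowth ω c K)) :=
          min_le_min (le_mul_of_one_le_left hM hc) (by rw [pow_succ', mul_assoc])
      _ = c * min M (c ^ n * cappedGrowth ω c K) := (mul_min_of_nonneg _ _ (by linarith)).symm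
      _ ≤ c * cappedGrowth ω c (K + n) := by gcongr

theorem tendsto_atTop (hc : 1 < c) (hpos : ∀ k, 0 < ω k) (hmono : Monotone ω)
    (hlim : Tendsto ω atTop atTop) : Tendsto (cappedGrowth ω c) atTop atTop := by
  refine tendsto_atTop_atTop_of_monotone (monotone hc.le hpos hmono) fun b => ?_
  obtain ⟨K, hK⟩ := tendsto_atTop_atTop.1 hlim (max b 0)
  have hfK := pos (zero_lt_one.trans hc) hpos K
  obtain ⟨n, hn⟩ := pow_unbounded_of_one_lt (max b 0 / cappedGrowth ω c K) hc
  rw [div_lt_iff₀ hfK] at hn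
  refine ⟨K + n, ?_⟩
  calc b ≤ max b 0 := le_max_left b 0
    _ = min (max b 0) (c ^ n * cappedGrowth ω c K) := (min_eq_left hn.le).symm
    _ ≤ cappedGrowth ω c (K + n) := min_pow_mul_le hc.le (le_max_right b 0) hK n

end cappedGrowth

theorem frequency_envelope_refinement_general (ω : ℕ → ℝ) (κ : ℝ)
    (hpos : ∀ k, 0 < ω k)
    (hmono : ∀ k, ω k ≤ ω (k + 1))
    (hlim : Tendsto ω atTop atTop) :
    ∀ κ' : ℝ, 1 < κ' → κ' < κ →
      ∃ ω' : ℕ → ℝ, (∀ k, 0 < ω' k) ∧ (∀ k, ω' k ≤ ω k) ∧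
        (∀ k, ω' k ≤ ω' (k + 1)) ∧ (∀ k, ω' (k + 1) ≤ κ' * ω' k) ∧
        Tendsto ω' atTop atTop := by
  intro κ' hκ' _
  have hω : Monotone ω := monotone_nat_of_le_succ hmono
  have hf : Monotone (cappedGrowth ω κ') := cappedGrowth.monotone hκ'.le hpos hω
  exact ⟨cappedGrowth ω κ', cappedGrowth.pos (zero_lt_one.trans hκ') hpos, cappedGrowth.le,
    fun k => hf k.le_succ, cappedGrowth.succ_le_mul, cappedGrowth.tendsto_atTop hκ' hpos hω hlim⟩

/-- Frequency envelope lemma: the sequence is indexed by the dyadic exponent,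
`ω k` standing for `ω_{2^k}`. -/
theorem frequency_envelope_refinement (ω : ℕ → ℝ) (κ : ℝ) (hκ : 1 < κ)
    (hpos : ∀ k, 0 < ω k)
    (hmono : ∀ k, ω k ≤ ω (k + 1))
    (hdbl : ∀ k, ω (k + 1) ≤ κ * ω k)
    (hlim : Tendsto ω atTop atTop) :
    ∀ κ' : ℝ, 1 < κ' → κ' < κ →
      ∃ ω' : ℕ → ℝ, (∀ k, 0 < ω' k) ∧ (∀ k, ω' k ≤ ω k) ∧
        (∀ k, ω' k ≤ ω' (k + 1)) ∧ (∀ k, ω' (k + 1) ≤ κ' * ω' k) ∧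
        Tendsto ω' atTop atTop :=
  frequency_envelope_refinement_general ω κ hpos hmono hlim
end
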